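/- Let α ∈ ℝ[t] be nonzero and r₁, r₂, r₃ ∈ ℝ[t], and suppose the curve r = (r₁/α, r₂/α, r₃/α) is a Pythagorean-hodograph curve, i.e. there exists σ ∈ RatFunc ℝ with ((r₁/α)′)² + ((r₂/α)′)² + ((r₃/α)′)² = σ² in the field of real rational functions. Then there exists a nonzero A ∈ ℍ[t], reduced with respect to i, such that the framing condition holds: with b = −½(r₁·i + r₂·j + r₃·k), the polynomials α·b′ − α′·b and A i Ā commute, i.e. (α·b′ − α′·b)·(A i Ā) = (A i Ā)·(α·b′ − α′·b). -/

import Mathlib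

/-!
Write `p = α r′ − α′ r ∈ ℝ[X]³`, so that `α b′ − α′ b = −½ (p₁ i + p₂ j + p₃ k)`. The PH condition
says `p₁² + p₂² + p₃² = (σ α²)²` in `ℝ(t)`; as `ℝ[X]` is integrally closed, the sum is `W²` for a
polynomial `W`. Then `q = (p₁ + W) i + p₂ j + p₃ k` satisfies
`q i q̄ = 2 (p₁ + W) (p₁ i + p₂ j + p₃ k)`, which commutes with `p₁ i + p₂ j + p₃ k` (if
`p₂ = p₃ = 0`, when `q` may vanish, take `q = 1` instead). Finally, among the nonzero `A` for which
`A i Ā` commutes with `p₁ i + p₂ j + p₃ k`, one of least degree is reduced: splitting off a real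
factor `ψ` or a right factor `R` with coefficients in `ℝ + ℝ i` multiplies `A i Ā` by the nonzero
real polynomial `ψ²`, resp. `R R̄`, so the cofactor would be such an `A` of smaller degree.

Quaternion identities in `ℍ[X]` are checked in the isomorphic algebra `ℍ[ℝ[X]]` of quaternions
over the commutative ring `ℝ[X]`, where they become componentwise polynomial identities.
-/

open Polynomial

noncomputable section

/-- The quaternion unit `i`. -/
def qi : Quaternion ℝ := ⟨0, 1, 0, 0⟩
/-- The quaternion unit `j`. -/
def qj : Quaternion ℝ := ⟨0, 0, 1, 0⟩
/-- The quaternion unit `k`. -/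
def qk : Quaternion ℝ := ⟨0, 0, 0, 1⟩

/-- Embedding of real polynomials into quaternion polynomials (scalar coefficients). -/
def toQ : Polynomial ℝ →+* Polynomial (Quaternion ℝ) :=
  mapRingHom (algebraMap ℝ (Quaternion ℝ))

/-- Coefficientwise quaternion conjugation of a quaternion polynomial. -/
def pconj (p : Polynomial (Quaternion ℝ)) : Polynomial (Quaternion ℝ) :=
  p.sum fun n a => monomial n (star a)

/-- `A ∈ ℍ[t]` is *reduced with respect to `i`* if it has no real polynomial factor of
positive degree and no right factor of positive degree all of whose coefficients lie in the
subalgebra of `ℍ` generated by `1` and `i`. -/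
def ReducedWrtI (A : Polynomial (Quaternion ℝ)) : Prop :=
  (∀ ψ : Polynomial ℝ, ∀ A' : Polynomial (Quaternion ℝ), A = toQ ψ * A' → ψ.natDegree = 0) ∧
  (∀ A' R : Polynomial (Quaternion ℝ), A = A' * R →
    (∀ n, (R.coeff n).imJ = 0 ∧ (R.coeff n).imK = 0) → R.natDegree = 0)

/-- The derivative of a real rational function, extending polynomial differentiation
(defined via the quotient rule on the canonical numerator and denominator). -/
def ratDeriv (f : RatFunc ℝ) : RatFunc ℝ :=
  (algebraMap (Polynomial ℝ) (RatFunc ℝ) (derivative f.num) *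
      algebraMap (Polynomial ℝ) (RatFunc ℝ) f.denom -
    algebraMap (Polynomial ℝ) (RatFunc ℝ) f.num *
      algebraMap (Polynomial ℝ) (RatFunc ℝ) (derivative f.denom)) /
  algebraMap (Polynomial ℝ) (RatFunc ℝ) (f.denom ^ 2)

lemma exists_eq_sq_of_sq_eq_algebraMap {R K : Type*} [CommRing R] [IsDomain R]
    [IsIntegrallyClosed R] [Field K] [Algebra R K] [IsFractionRing R K] {x : K} {a : R}
    (h : x ^ 2 = algebraMap R K a) : ∃ W, a = W ^ 2 := by
  obtain ⟨W, rfl⟩ := IsIntegrallyClosed.exists_algebraMap_eq_of_isIntegral_pow (R := R) two_pos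
    (h ▸ isIntegral_algebraMap)
  exact ⟨W, IsFractionRing.injective R K (by rw [map_pow, h])⟩

lemma ratDeriv_div_algebraMap (r : ℝ[X]) {a : ℝ[X]} (ha : a ≠ 0) :
    ratDeriv (algebraMap ℝ[X] (RatFunc ℝ) r / algebraMap ℝ[X] (RatFunc ℝ) a) =
      algebraMap ℝ[X] (RatFunc ℝ) (a * derivative r - derivative a * r) /
        algebraMap ℝ[X] (RatFunc ℝ) (a ^ 2) := by
  set f := algebraMap ℝ[X] (RatFunc ℝ) r / algebraMap ℝ[X] (RatFunc ℝ) a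
  have hcross : f.num * a = r * f.denom := by
    apply IsFractionRing.injective ℝ[X] (RatFunc ℝ)
    rw [map_mul, map_mul, ← div_eq_div_iff (by simpa using f.denom_ne_zero) (by simpa using ha),
      RatFunc.num_div_denom]
  have hcross' := congrArg derivative hcross
  rw [derivative_mul, derivative_mul] at hcross'
  rw [ratDeriv, div_eq_div_iff (by simpa using f.denom_ne_zero) (by simpa using ha),
    ← map_mul, ← map_mul, ← map_sub, ← map_mul, ← map_mul]
  refine congrArg _ ?_
  linear_combination (f.denom * a) * hcross' -
    (derivative f.denom * a + derivative a * f.denom) * hcross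

lemma exists_sum_sq_eq_sq_of_isPH {α : ℝ[X]} (hα : α ≠ 0) (r₁ r₂ r₃ : ℝ[X]) {σ : RatFunc ℝ}
    (hPH : ratDeriv (algebraMap ℝ[X] (RatFunc ℝ) r₁ / algebraMap ℝ[X] (RatFunc ℝ) α) ^ 2 +
        ratDeriv (algebraMap ℝ[X] (RatFunc ℝ) r₂ / algebraMap ℝ[X] (RatFunc ℝ) α) ^ 2 +
        ratDeriv (algebraMap ℝ[X] (RatFunc ℝ) r₃ / algebraMap ℝ[X] (RatFunc ℝ) α) ^ 2 = σ ^ 2) :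
    ∃ W, (α * derivative r₁ - derivative α * r₁) ^ 2 +
      (α * derivative r₂ - derivative α * r₂) ^ 2 +
      (α * derivative r₃ - derivative α * r₃) ^ 2 = W ^ 2 := by
  have hα2 : algebraMap ℝ[X] (RatFunc ℝ) (α ^ 2) ≠ 0 := by simpa using hα
  simp only [ratDeriv_div_algebraMap _ hα, div_pow, ← add_div, div_eq_iff (pow_ne_zero 2 hα2)]
    at hPH
  refine exists_eq_sq_of_sq_eq_algebraMap (x := σ * algebraMap ℝ[X] (RatFunc ℝ) (α ^ 2)) ?_
  rw [mul_pow, ← hPH]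
  simp only [map_add, map_pow]

open scoped Quaternion

lemma exists_ne_zero_commute_mul_i_mul_star {R : Type*} [CommRing R] [Nontrivial R]
    {a b c W : R} (h : a ^ 2 + b ^ 2 + c ^ 2 = W ^ 2) :
    ∃ q : ℍ[R,-1,0,-1], q ≠ 0 ∧ Commute ⟨0, a, b, c⟩ (q * ⟨0, 1, 0, 0⟩ * star q) := by
  by_cases hbc : b = 0 ∧ c = 0
  · refine ⟨1, one_ne_zero, ?_⟩
    obtain ⟨rfl, rfl⟩ := hbc
    rw [one_mul, star_one, mul_one, commute_iff_eq]
    ext : 1 <;> simp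
  · refine ⟨⟨0, a + W, b, c⟩, fun h0 => hbc ?_, ?_⟩
    · exact ⟨congrArg QuaternionAlgebra.imJ h0, congrArg QuaternionAlgebra.imK h0⟩
    · have hq : (⟨0, a + W, b, c⟩ : ℍ[R,-1,0,-1]) * ⟨0, 1, 0, 0⟩ * star ⟨0, a + W, b, c⟩ =
          (2 * (a + W)) • ⟨0, a, b, c⟩ := by
        ext : 1 <;> simp
        · ring
        · linear_combination -h
        · ring
        · ring
      rw [hq]
      exact (Commute.refl _).smul_right _

section

attribute [local instance] Polynomial.algebra

lemma toQ_mul_eq_smul (f : ℝ[X]) (P : (Quaternion ℝ)[X]) : toQ f * P = f • P := rfl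

lemma natDegree_toQ (ψ : ℝ[X]) : (toQ ψ).natDegree = ψ.natDegree :=
  natDegree_map_eq_of_injective (algebraMap ℝ (Quaternion ℝ)).injective ψ

lemma coeff_pconj (p : (Quaternion ℝ)[X]) (n : ℕ) : (pconj p).coeff n = star (p.coeff n) := by
  simp only [pconj, Polynomial.sum_def, finsetSum_coeff, coeff_monomial, Finset.sum_ite_eq',
    ite_eq_left_iff]
  intro h
  rw [notMem_support_iff.mp h, star_zero]

def quatBasis : QuaternionAlgebra.Basis (Quaternion ℝ)[X] (-1 : ℝ[X]) 0 (-1) where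
  i := C qi
  j := C qj
  k := C qk
  i_mul_i := by
    rw [neg_smul, one_smul, zero_smul, add_zero, ← C_mul, ← C_1, ← C_neg]
    congr 1; ext <;> simp <;> simp [qi]
  j_mul_j := by
    rw [neg_smul, one_smul, ← C_mul, ← C_1, ← C_neg]
    congr 1; ext <;> simp <;> simp [qj]
  i_mul_j := by
    rw [← C_mul]
    congr 1; ext <;> simp <;> simp [qi, qj, qk]
  j_mul_i := by
    rw [zero_smul, zero_sub, ← C_mul, ← C_neg]
    congr 1; ext <;> simp <;> simp [qi, qj, qk]

def ofQuat : ℍ[ℝ[X],-1,0,-1] →ₐ[ℝ[X]] (Quaternion ℝ)[X] := QuaternionAlgebra.lift quatBasis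

lemma ofQuat_apply (x : ℍ[ℝ[X],-1,0,-1]) :
    ofQuat x = toQ x.re + toQ x.imI * C qi + toQ x.imJ * C qj + toQ x.imK * C qk := rfl

lemma ofQuat_i : ofQuat ⟨0, 1, 0, 0⟩ = C qi := by
  simp [ofQuat_apply]

section coeff

variable (x : ℍ[ℝ[X],-1,0,-1]) (n : ℕ)

@[simp] lemma re_coeff_ofQuat : ((ofQuat x).coeff n).re = x.re.coeff n := by
  simp [ofQuat_apply, coeff_mul_C, toQ, coeff_map]; simp [qi, qj, qk]

@[simp] lemma imI_coeff_ofQuat : ((ofQuat x).coeff n).imI = x.imI.coeff n := by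
  simp [ofQuat_apply, coeff_mul_C, toQ, coeff_map]; simp [qi, qj, qk]

@[simp] lemma imJ_coeff_ofQuat : ((ofQuat x).coeff n).imJ = x.imJ.coeff n := by
  simp [ofQuat_apply, coeff_mul_C, toQ, coeff_map]; simp [qi, qj, qk]

@[simp] lemma imK_coeff_ofQuat : ((ofQuat x).coeff n).imK = x.imK.coeff n := by
  simp [ofQuat_apply, coeff_mul_C, toQ, coeff_map]; simp [qi, qj, qk]

end coeff

lemma ofQuat_injective : Function.Injective ofQuat := by
  intro x y h
  have hc n := congrArg (coeff · n) h
  ext n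
  · simpa using congrArg QuaternionAlgebra.re (hc n)
  · simpa using congrArg QuaternionAlgebra.imI (hc n)
  · simpa using congrArg QuaternionAlgebra.imJ (hc n)
  · simpa using congrArg QuaternionAlgebra.imK (hc n)

lemma ofQuat_surjective : Function.Surjective ofQuat := by
  intro P
  induction P using Polynomial.induction_on with
  | C a =>
    refine ⟨⟨C a.re, C a.imI, C a.imJ, C a.imK⟩, ?_⟩
    ext n : 1
    by_cases hn : n = 0 <;> ext <;> simp [coeff_C, hn]
  | add P Q hP hQ =>
    obtain ⟨x, rfl⟩ := hP
    obtain ⟨y, rfl⟩ := hQ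
    exact ⟨x + y, map_add ..⟩
  | monomial n a ih =>
    obtain ⟨x, hx⟩ := ih
    refine ⟨x * algebraMap ℝ[X] _ X, ?_⟩
    rw [map_mul, hx, pow_succ, ← mul_assoc, AlgHom.commutes, Polynomial.algebraMap_def,
      coe_mapRingHom, map_X]

lemma pconj_ofQuat (x : ℍ[ℝ[X],-1,0,-1]) : pconj (ofQuat x) = ofQuat (star x) := by
  ext n : 1
  rw [coeff_pconj]
  ext <;> simp

lemma pconj_mul (P Q : (Quaternion ℝ)[X]) : pconj (P * Q) = pconj Q * pconj P := by
  obtain ⟨x, rfl⟩ := ofQuat_surjective P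
  obtain ⟨y, rfl⟩ := ofQuat_surjective Q
  simp only [← map_mul, pconj_ofQuat, star_mul]

lemma derivative_ofQuat (a b c d : ℝ[X]) :
    derivative (ofQuat ⟨a, b, c, d⟩) =
      ofQuat ⟨derivative a, derivative b, derivative c, derivative d⟩ := by
  ext n : 1
  rw [coeff_derivative]
  ext <;> simp [coeff_derivative]

lemma re_mul_star_ne_zero {r : ℍ[ℝ[X],-1,0,-1]} (hr : r ≠ 0) : (r * star r).re ≠ 0 := by
  intro h
  have h0 : ofQuat r * ofQuat (star r) = 0 := by
    rw [← map_mul, QuaternionAlgebra.mul_star_eq_coe, h, QuaternionAlgebra.coe_zero, map_zero]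
  rcases mul_eq_zero.mp h0 with h' | h'
  · exact hr (ofQuat_injective (h'.trans (map_zero _).symm))
  · exact hr (star_eq_zero.mp (ofQuat_injective (h'.trans (map_zero _).symm)))

lemma mul_derivative_sub_derivative_mul_eq_smul_ofQuat (α r₁ r₂ r₃ : ℝ[X]) (c : ℝ) :
    toQ α * derivative (c • (toQ r₁ * C qi + toQ r₂ * C qj + toQ r₃ * C qk)) -
        toQ (derivative α) * (c • (toQ r₁ * C qi + toQ r₂ * C qj + toQ r₃ * C qk)) =
      c • ofQuat ⟨0, α * derivative r₁ - derivative α * r₁, α * derivative r₂ - derivative α * r₂,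
        α * derivative r₃ - derivative α * r₃⟩ := by
  have hvec : toQ r₁ * C qi + toQ r₂ * C qj + toQ r₃ * C qk = ofQuat ⟨0, r₁, r₂, r₃⟩ := by
    simp [ofQuat_apply]
  rw [hvec, derivative_smul, derivative_ofQuat, mul_smul_comm, mul_smul_comm, ← smul_sub,
    toQ_mul_eq_smul, toQ_mul_eq_smul, ← map_smul, ← map_smul, ← map_sub]
  refine congrArg (fun x => c • ofQuat x) ?_
  ext : 1 <;> simp

def hopf (A : (Quaternion ℝ)[X]) : (Quaternion ℝ)[X] := A * C qi * pconj A

lemma hopf_mul (A R : (Quaternion ℝ)[X]) : hopf (A * R) = A * hopf R * pconj A := by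
  simp only [hopf, pconj_mul, mul_assoc]

lemma hopf_ofQuat (q : ℍ[ℝ[X],-1,0,-1]) :
    hopf (ofQuat q) = ofQuat (q * ⟨0, 1, 0, 0⟩ * star q) := by
  rw [hopf, pconj_ofQuat, map_mul, map_mul, ofQuat_i]

lemma hopf_ofQuat_of_imJ_imK {r : ℍ[ℝ[X],-1,0,-1]} (hJ : r.imJ = 0) (hK : r.imK = 0) :
    hopf (ofQuat r) = (r * star r).re • C qi := by
  have hr : r * ⟨0, 1, 0, 0⟩ * star r = (r * star r).re • ⟨0, 1, 0, 0⟩ := by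
    ext : 1 <;> simp [hJ, hK] <;> ring
  rw [hopf_ofQuat, hr, map_smul, ofQuat_i]

lemma commute_hopf_of_commute_hopf_mul {Q A R : (Quaternion ℝ)[X]} (hR : R ≠ 0)
    (hRi : ∀ n, (R.coeff n).imJ = 0 ∧ (R.coeff n).imK = 0) (h : Commute Q (hopf (A * R))) :
    Commute Q (hopf A) := by
  obtain ⟨r, rfl⟩ := ofQuat_surjective R
  have hJ : r.imJ = 0 := Polynomial.ext fun n => by simpa using (hRi n).1
  have hK : r.imK = 0 := Polynomial.ext fun n => by simpa using (hRi n).2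
  have hr : r ≠ 0 := by rintro rfl; exact hR (map_zero _)
  have hc : toQ (r * star r).re ≠ 0 :=
    (map_ne_zero_iff _ (Polynomial.map_injective _ (algebraMap ℝ (Quaternion ℝ)).injective)).mpr
      (re_mul_star_ne_zero hr)
  rw [hopf_mul, hopf_ofQuat_of_imJ_imK hJ hK, mul_smul_comm, smul_mul_assoc] at h
  have h' := h.eq
  rw [mul_smul_comm, smul_mul_assoc, ← toQ_mul_eq_smul, ← toQ_mul_eq_smul] at h'
  exact mul_left_cancel₀ hc h'

lemma reducedWrtI_of_forall_natDegree_le {Q A : (Quaternion ℝ)[X]} (hA : A ≠ 0)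
    (hQA : Commute Q (hopf A))
    (hmin : ∀ B, B ≠ 0 → Commute Q (hopf B) → A.natDegree ≤ B.natDegree) : ReducedWrtI A := by
  have right_factor : ∀ A' R, A = A' * R → (∀ n, (R.coeff n).imJ = 0 ∧ (R.coeff n).imK = 0) →
      R.natDegree = 0 := by
    rintro A' R rfl hRi
    have hA' : A' ≠ 0 := left_ne_zero_of_mul hA
    have hR : R ≠ 0 := right_ne_zero_of_mul hA
    have hle := hmin A' hA' (commute_hopf_of_commute_hopf_mul hR hRi hQA)
    rw [natDegree_mul hA' hR] at hle
    omega
  refine ⟨fun ψ A' h => ?_, right_factor⟩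
  rw [← natDegree_toQ]
  refine right_factor A' (toQ ψ) (h.trans (Algebra.commutes ψ A')) fun n => ?_
  simp [toQ, coeff_map]

lemma exists_reducedWrtI_commute_hopf {Q A : (Quaternion ℝ)[X]} (hA : A ≠ 0)
    (hQA : Commute Q (hopf A)) : ∃ B, B ≠ 0 ∧ ReducedWrtI B ∧ Commute Q (hopf B) := by
  let S := {B | B ≠ 0 ∧ Commute Q (hopf B)}
  obtain ⟨hB, hQB⟩ := Function.argminOn_mem natDegree S ⟨A, hA, hQA⟩
  exact ⟨_, hB, reducedWrtI_of_forall_natDegree_le hB hQB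
    fun B hB hQB => Function.argminOn_le natDegree S ⟨hB, hQB⟩, hQB⟩

end

/-- If `r = (r₁/α, r₂/α, r₃/α)` is a Pythagorean-hodograph curve, then
there exists a nonzero `A ∈ ℍ[t]`, reduced with respect to `i`, such that the framing
condition holds: with `b = −½(r₁i + r₂j + r₃k)`, the polynomials `α·b′ − α′·b` and `A i Ā`
commute. -/
theorem PH_implies_framing (α r₁ r₂ r₃ : Polynomial ℝ) (hα : α ≠ 0)
    (σ : RatFunc ℝ)
    (hPH : ratDeriv (algebraMap (Polynomial ℝ) (RatFunc ℝ) r₁ /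
          algebraMap (Polynomial ℝ) (RatFunc ℝ) α) ^ 2 +
        ratDeriv (algebraMap (Polynomial ℝ) (RatFunc ℝ) r₂ /
          algebraMap (Polynomial ℝ) (RatFunc ℝ) α) ^ 2 +
        ratDeriv (algebraMap (Polynomial ℝ) (RatFunc ℝ) r₃ /
          algebraMap (Polynomial ℝ) (RatFunc ℝ) α) ^ 2 = σ ^ 2) :
    ∃ A : Polynomial (Quaternion ℝ), A ≠ 0 ∧ ReducedWrtI A ∧
      (toQ α * derivative ((-(2⁻¹ : ℝ)) •
          (toQ r₁ * Polynomial.C qi + toQ r₂ * Polynomial.C qj + toQ r₃ * Polynomial.C qk)) -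
        toQ (derivative α) * ((-(2⁻¹ : ℝ)) •
          (toQ r₁ * Polynomial.C qi + toQ r₂ * Polynomial.C qj + toQ r₃ * Polynomial.C qk))) *
        (A * Polynomial.C qi * pconj A)
      = (A * Polynomial.C qi * pconj A) *
        (toQ α * derivative ((-(2⁻¹ : ℝ)) •
          (toQ r₁ * Polynomial.C qi + toQ r₂ * Polynomial.C qj + toQ r₃ * Polynomial.C qk)) -
        toQ (derivative α) * ((-(2⁻¹ : ℝ)) •
          (toQ r₁ * Polynomial.C qi + toQ r₂ * Polynomial.C qj + toQ r₃ * Polynomial.C qk))) := by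
  obtain ⟨W, hW⟩ := exists_sum_sq_eq_sq_of_isPH hα r₁ r₂ r₃ hPH
  obtain ⟨q, hq, hvq⟩ := exists_ne_zero_commute_mul_i_mul_star hW
  have hvA := hvq.map ofQuat
  rw [← hopf_ofQuat] at hvA
  obtain ⟨A, hA, hAred, hvA⟩ :=
    exists_reducedWrtI_commute_hopf ((map_ne_zero_iff _ ofQuat_injective).mpr hq) hvA
  refine ⟨A, hA, hAred, ?_⟩
  rw [mul_derivative_sub_derivative_mul_eq_smul_ofQuat]
  exact (hvA.smul_left _).eq
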